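/- Let ℱ be a nonempty closed convex set of free states and 𝔉 a set of channels each of which maps ℱ into ℱ, containing for every σ ∈ ℱ the replacement channel τ ↦ Tr(τ)σ. For the max-relative entropy D_max(ρ,σ) = log₂ inf{λ > 0 : λσ − ρ is positive semidefinite} (with inf ∅ = ∞, so D_max takes values in [0,∞]), the resource generating and increasing powers coincide and admit the max-min characterization: Ω̃_{D_max}(N) = Ω_{D_max}(N) = sup_{ρ∈ℱ} inf_{M∈𝔉} D_max(N(ρ), M(ρ)) for every channel N. -/

import Mathlib

open scoped Kronecker ComplexOrder Classical

variable {ι : Type*} [Fintype ι] [DecidableEq ι]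

/-- A quantum state: positive semidefinite matrix of trace one. -/
def IsState (ρ : Matrix ι ι ℂ) : Prop := ρ.PosSemidef ∧ ρ.trace = 1

/-- The action of `id_n ⊗ N` on block matrices. -/
def idTensorMap (n : ℕ) (N : Matrix ι ι ℂ →ₗ[ℂ] Matrix ι ι ℂ)
    (M : Matrix (Fin n × ι) (Fin n × ι) ℂ) : Matrix (Fin n × ι) (Fin n × ι) ℂ :=
  Matrix.of fun p q => N (Matrix.of fun k l => M (p.1, k) (q.1, l)) p.2 q.2

/-- A quantum channel: completely positive trace preserving linear map. -/
structure Channel (ι : Type*) [Fintype ι] [DecidableEq ι] where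
  map : Matrix ι ι ℂ →ₗ[ℂ] Matrix ι ι ℂ
  cp : ∀ (n : ℕ) (M : Matrix (Fin n × ι) (Fin n × ι) ℂ), M.PosSemidef →
        (idTensorMap n map M).PosSemidef
  tp : ∀ A : Matrix ι ι ℂ, (map A).trace = A.trace

/-- The trace norm ‖A‖₁ = Tr √(AᴴA). -/
noncomputable def traceNorm (A : Matrix ι ι ℂ) : ℝ :=
  ((Matrix.posSemidef_conjTranspose_mul_self A).1.eigenvectorUnitary.1 *
    Matrix.diagonal (fun i : ι =>
      ((Real.sqrt ((Matrix.posSemidef_conjTranspose_mul_self A).1.eigenvalues i) : ℝ) : ℂ)) *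
    (star (Matrix.posSemidef_conjTranspose_mul_self A).1.eigenvectorUnitary : Matrix ι ι ℂ)).trace.re

/-- Trace-norm resource measure ω₁. -/
noncomputable def omega1 (F : Set (Matrix ι ι ℂ)) (ρ : Matrix ι ι ℂ) : ℝ :=
  (1/2) * sInf ((fun σ => traceNorm (ρ - σ)) '' F)

/-- Trace-norm resource generating power Ω₁. -/
noncomputable def genPower1 (F : Set (Matrix ι ι ℂ)) (N : Matrix ι ι ℂ → Matrix ι ι ℂ) : ℝ :=
  sSup ((fun ρ => omega1 F (N ρ)) '' F)

/-- Trace-norm resource increasing power Ω̃₁. -/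
noncomputable def incPower1 (F : Set (Matrix ι ι ℂ)) (N : Matrix ι ι ℂ → Matrix ι ι ℂ) : ℝ :=
  sSup ((fun ρ => omega1 F (N ρ) - omega1 F ρ) '' {ρ | IsState ρ})

/-- Holevo–Helstrom success probability of discriminating two channels with probe `ρ`. -/
noncomputable def psuccPair (N M : Matrix ι ι ℂ → Matrix ι ι ℂ) (ρ : Matrix ι ι ℂ) : ℝ :=
  1/2 + (1/4) * traceNorm (N ρ - M ρ)

/-- Success probability of discriminating `N` from the set of channels `Free` with probe `ρ`. -/
noncomputable def psuccChan (N : Matrix ι ι ℂ → Matrix ι ι ℂ) (Free : Set (Channel ι))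
    (ρ : Matrix ι ι ℂ) : ℝ :=
  sInf ((fun M : Channel ι => psuccPair N (⇑M.map) ρ) '' Free)

/-- Maximum success probability of discriminating `N` from `Free` using probes from `F`. -/
noncomputable def psuccFF (N : Matrix ι ι ℂ → Matrix ι ι ℂ) (Free : Set (Channel ι))
    (F : Set (Matrix ι ι ℂ)) : ℝ :=
  sSup ((fun ρ => psuccChan N Free ρ) '' F)

/-- The max-relative entropy `D_max(ρ,σ) = log₂ inf {λ > 0 : λσ - ρ ⪰ 0}`, with `inf ∅ = ∞`. -/

noncomputable def Dmax (ρ σ : Matrix ι ι ℂ) : EReal :=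
  if {t : ℝ | 0 < t ∧ ((t : ℂ) • σ - ρ).PosSemidef}.Nonempty then
    ((Real.logb 2 (sInf {t : ℝ | 0 < t ∧ ((t : ℂ) • σ - ρ).PosSemidef}) : ℝ) : EReal)
  else ⊤

/-- Max-relative entropy resource measure. -/
noncomputable def omegaMax (F : Set (Matrix ι ι ℂ)) (ρ : Matrix ι ι ℂ) : EReal :=
  sInf ((fun σ => Dmax ρ σ) '' F)

/-- Max-relative entropy resource generating power. -/
noncomputable def genPowerMax (F : Set (Matrix ι ι ℂ)) (N : Matrix ι ι ℂ → Matrix ι ι ℂ) :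
    EReal :=
  sSup ((fun ρ => omegaMax F (N ρ)) '' F)

/-- Max-relative entropy resource increasing power. -/
noncomputable def incPowerMax (F : Set (Matrix ι ι ℂ)) (N : Matrix ι ι ℂ → Matrix ι ι ℂ) :
    EReal :=
  sSup ((fun ρ => omegaMax F (N ρ) - omegaMax F ρ) '' {ρ | IsState ρ})

/-!
`D_max` obeys a chain rule along a channel `N`: if `l σ - ρ ⪰ 0` and `μ τ - N σ ⪰ 0`, then
`l μ τ - N ρ = l (μ τ - N σ) + N (l σ - ρ) ⪰ 0`, so `ω(N ρ) ≤ D_max(ρ, σ) + ω(N σ)`. For free `σ`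
the last term is at most `Ω(N)`, and minimizing over `σ` gives `ω(N ρ) - ω(ρ) ≤ Ω(N)`; conversely
free states have `ω = 0`, so `Ω(N) ≤ Ω̃(N)`. The max-min formula holds because, at a free state `ρ`,
the free channels sweep out exactly `ℱ`: they preserve `ℱ`, and the replacement channels reach every
`σ ∈ ℱ`.
-/

open Matrix

variable {n : Type*}

lemma Matrix.isClosed_setOf_posSemidef [Fintype n] :
    IsClosed {A : Matrix n n ℂ | A.PosSemidef} := by
  simp_rw [posSemidef_iff_dotProduct_mulVec, Set.ofPred_and, Set.ofPred_forall]
  refine (isClosed_eq (by fun_prop) continuous_id).inter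
    (isClosed_iInter fun x => isClosed_le continuous_const ?_)
  exact continuous_const.dotProduct (continuous_id.matrix_mulVec continuous_const)

def dmaxScalars (ρ σ : Matrix n n ℂ) : Set ℝ :=
  {t : ℝ | 0 < t ∧ ((t : ℂ) • σ - ρ).PosSemidef}

lemma Dmax_eq (ρ σ : Matrix n n ℂ) :
    Dmax ρ σ = if (dmaxScalars ρ σ).Nonempty then
      ((Real.logb 2 (sInf (dmaxScalars ρ σ)) : ℝ) : EReal) else ⊤ := rfl

section dmaxScalars

variable [Fintype n] {ρ σ : Matrix n n ℂ}

lemma one_le_of_mem_dmaxScalars (hρ : ρ.trace = 1) (hσ : σ.trace = 1) {t : ℝ}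
    (ht : t ∈ dmaxScalars ρ σ) : 1 ≤ t := by
  have h := ht.2.trace_nonneg
  rw [trace_sub, trace_smul, hρ, hσ, smul_eq_mul, mul_one, ← Complex.ofReal_one,
    ← Complex.ofReal_sub, Complex.zero_le_real] at h
  linarith

lemma sInf_mem_dmaxScalars (hρ : ρ.trace = 1) (hσ : σ.trace = 1)
    (hne : (dmaxScalars ρ σ).Nonempty) : sInf (dmaxScalars ρ σ) ∈ dmaxScalars ρ σ := by
  have hbdd : BddBelow (dmaxScalars ρ σ) := ⟨0, fun _ ht => ht.1.le⟩
  have hclosed : IsClosed {t : ℝ | ((t : ℂ) • σ - ρ).PosSemidef} :=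
    isClosed_setOf_posSemidef.preimage (by fun_prop)
  refine ⟨one_pos.trans_le (le_csInf hne fun _ => one_le_of_mem_dmaxScalars hρ hσ), ?_⟩
  exact closure_minimal (fun _ ht => ht.2) hclosed (csInf_mem_closure hne hbdd)

lemma Dmax_le_logb (hρ : ρ.trace = 1) (hσ : σ.trace = 1) {t : ℝ}
    (ht : t ∈ dmaxScalars ρ σ) : Dmax ρ σ ≤ Real.logb 2 t := by
  have hne : (dmaxScalars ρ σ).Nonempty := ⟨t, ht⟩
  have hpos : 0 < sInf (dmaxScalars ρ σ) := (sInf_mem_dmaxScalars hρ hσ hne).1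
  rw [Dmax_eq, if_pos hne, EReal.coe_le_coe_iff]
  exact Real.logb_le_logb_of_le one_lt_two hpos (csInf_le ⟨0, fun _ hs => hs.1.le⟩ ht)

lemma exists_Dmax_eq_logb (hρ : ρ.trace = 1) (hσ : σ.trace = 1) (h : Dmax ρ σ ≠ ⊤) :
    ∃ t ∈ dmaxScalars ρ σ, Dmax ρ σ = Real.logb 2 t := by
  rw [Dmax_eq] at h ⊢
  split_ifs at h ⊢ with hne
  · exact ⟨_, sInf_mem_dmaxScalars hρ hσ hne, rfl⟩
  · exact absurd rfl h

lemma Dmax_nonneg (hρ : ρ.trace = 1) (hσ : σ.trace = 1) : 0 ≤ Dmax ρ σ := by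
  by_cases h : Dmax ρ σ = ⊤
  · simp [h]
  obtain ⟨t, ht, hDt⟩ := exists_Dmax_eq_logb hρ hσ h
  rw [hDt, ← EReal.coe_zero, EReal.coe_le_coe_iff]
  exact Real.logb_nonneg one_lt_two (one_le_of_mem_dmaxScalars hρ hσ ht)

lemma Dmax_self (hρ : ρ.trace = 1) : Dmax ρ ρ = 0 := by
  have h1 : (1 : ℝ) ∈ dmaxScalars ρ ρ := ⟨one_pos, by simpa using PosSemidef.zero⟩
  refine le_antisymm ?_ (Dmax_nonneg hρ hρ)
  simpa using Dmax_le_logb hρ hρ h1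

end dmaxScalars

section Channel

variable [Fintype n] [DecidableEq n] (N : Channel n)

lemma Channel.map_posSemidef {A : Matrix n n ℂ} (hA : A.PosSemidef) : (N.map A).PosSemidef := by
  let e := Equiv.uniqueProd n (Fin 1)
  have h : (idTensorMap 1 N.map (A.submatrix e e)).PosSemidef :=
    N.cp 1 _ ((posSemidef_submatrix_equiv e).mpr hA)
  exact (posSemidef_submatrix_equiv e).mp h

lemma Dmax_map_le_add {ρ σ τ : Matrix n n ℂ} (hρ : ρ.trace = 1) (hσ : σ.trace = 1)
    (hτ : τ.trace = 1) : Dmax (N.map ρ) τ ≤ Dmax ρ σ + Dmax (N.map σ) τ := by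
  have hNσ : (N.map σ).trace = 1 := by rw [N.tp, hσ]
  by_cases h₁ : Dmax ρ σ = ⊤
  · rw [h₁, EReal.top_add_of_ne_bot (ne_bot_of_le_ne_bot EReal.zero_ne_bot
      (Dmax_nonneg hNσ hτ))]
    exact le_top
  by_cases h₂ : Dmax (N.map σ) τ = ⊤
  · rw [h₂, EReal.add_top_of_ne_bot (ne_bot_of_le_ne_bot EReal.zero_ne_bot
      (Dmax_nonneg hρ hσ))]
    exact le_top
  obtain ⟨l, hl, hDl⟩ := exists_Dmax_eq_logb hρ hσ h₁
  obtain ⟨μ, hμ, hDμ⟩ := exists_Dmax_eq_logb hNσ hτ h₂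
  have hlμ : l * μ ∈ dmaxScalars (N.map ρ) τ := by
    refine ⟨mul_pos hl.1 hμ.1, ?_⟩
    have h : ((l * μ : ℝ) : ℂ) • τ - N.map ρ
        = (l : ℂ) • ((μ : ℂ) • τ - N.map σ) + N.map ((l : ℂ) • σ - ρ) := by
      rw [map_sub, map_smul]
      push_cast
      module
    rw [h]
    exact (hμ.2.smul (Complex.zero_le_real.mpr hl.1.le)).add (N.map_posSemidef hl.2)
  calc Dmax (N.map ρ) τ ≤ Real.logb 2 (l * μ) := Dmax_le_logb (by rw [N.tp, hρ]) hτ hlμ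
    _ = Dmax ρ σ + Dmax (N.map σ) τ := by
      rw [hDl, hDμ, Real.logb_mul hl.1.ne' hμ.1.ne', EReal.coe_add]

end Channel

lemma EReal.le_add_sInf {a b : EReal} {s : Set EReal} (hb : b ≠ ⊥) (hs : sInf s ≠ ⊥)
    (h : ∀ c ∈ s, a ≤ b + c) : a ≤ b + sInf s := by
  have hsub : a - b ≤ sInf s := le_sInf fun c hc => EReal.sub_le_of_le_add' (h c hc)
  rw [add_comm]
  exact (EReal.sub_le_iff_le_add (.inl hb) (.inr hs)).mp hsub

section omegaMax

variable [Fintype n] {F : Set (Matrix n n ℂ)}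

lemma omegaMax_nonneg (hF : ∀ σ ∈ F, σ.trace = 1) {ρ : Matrix n n ℂ} (hρ : ρ.trace = 1) :
    0 ≤ omegaMax F ρ := by
  refine le_sInf ?_
  rintro _ ⟨σ, hσ, rfl⟩
  exact Dmax_nonneg hρ (hF σ hσ)

lemma omegaMax_eq_zero (hF : ∀ σ ∈ F, σ.trace = 1) {ρ : Matrix n n ℂ} (hρ : ρ ∈ F) :
    omegaMax F ρ = 0 :=
  le_antisymm ((sInf_le (Set.mem_image_of_mem _ hρ)).trans_eq (Dmax_self (hF ρ hρ)))
    (omegaMax_nonneg hF (hF ρ hρ))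

variable [DecidableEq n] (N : Channel n)

lemma omegaMax_map_le_add (hF : ∀ σ ∈ F, σ.trace = 1) {ρ σ : Matrix n n ℂ} (hρ : ρ.trace = 1)
    (hσ : σ.trace = 1) :
    omegaMax F (N.map ρ) ≤ Dmax ρ σ + omegaMax F (N.map σ) := by
  refine EReal.le_add_sInf (ne_bot_of_le_ne_bot EReal.zero_ne_bot (Dmax_nonneg hρ hσ))
    (ne_bot_of_le_ne_bot EReal.zero_ne_bot (omegaMax_nonneg hF (by rw [N.tp, hσ]))) ?_
  rintro _ ⟨τ, hτ, rfl⟩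
  exact (sInf_le (Set.mem_image_of_mem _ hτ)).trans (Dmax_map_le_add N hρ hσ (hF τ hτ))

lemma omegaMax_map_sub_le_genPowerMax (hF : ∀ σ ∈ F, σ.trace = 1) (hFne : F.Nonempty)
    {ρ : Matrix n n ℂ} (hρ : ρ.trace = 1) :
    omegaMax F (N.map ρ) - omegaMax F ρ ≤ genPowerMax F N.map := by
  obtain ⟨ρ₀, hρ₀⟩ := hFne
  have hG : 0 ≤ genPowerMax F N.map :=
    (omegaMax_nonneg hF (by rw [N.tp, hF ρ₀ hρ₀])).trans
      (le_sSup (Set.mem_image_of_mem _ hρ₀))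
  refine EReal.sub_le_of_le_add (EReal.le_add_sInf (ne_bot_of_le_ne_bot EReal.zero_ne_bot hG)
    (ne_bot_of_le_ne_bot EReal.zero_ne_bot (omegaMax_nonneg hF hρ)) ?_)
  rintro _ ⟨σ, hσ, rfl⟩
  calc omegaMax F (N.map ρ) ≤ Dmax ρ σ + omegaMax F (N.map σ) :=
        omegaMax_map_le_add N hF hρ (hF σ hσ)
    _ ≤ Dmax ρ σ + genPowerMax F N.map := by
      gcongr
      exact le_sSup ⟨σ, hσ, rfl⟩
    _ = genPowerMax F N.map + Dmax ρ σ := add_comm _ _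

lemma incPowerMax_eq_genPowerMax (hF : ∀ σ ∈ F, IsState σ) (hFne : F.Nonempty) :
    incPowerMax F N.map = genPowerMax F N.map := by
  have hFtr : ∀ σ ∈ F, σ.trace = 1 := fun σ hσ => (hF σ hσ).2
  refine le_antisymm (sSup_le ?_) (sSup_le ?_)
  · rintro _ ⟨ρ, hρ, rfl⟩
    exact omegaMax_map_sub_le_genPowerMax N hFtr hFne hρ.2
  · rintro _ ⟨ρ, hρ, rfl⟩
    refine le_sSup ⟨ρ, hF ρ hρ, ?_⟩
    dsimp only
    rw [omegaMax_eq_zero hFtr hρ, sub_zero]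

end omegaMax

lemma image_channel_apply_eq [Fintype n] [DecidableEq n] {F : Set (Matrix n n ℂ)}
    {Free : Set (Channel n)} (hFree : ∀ M ∈ Free, ∀ ρ ∈ F, M.map ρ ∈ F)
    (hRepl : ∀ σ ∈ F, ∃ M ∈ Free, ∀ τ : Matrix n n ℂ, M.map τ = τ.trace • σ)
    {ρ : Matrix n n ℂ} (hρF : ρ ∈ F) (hρ : ρ.trace = 1) :
    (fun M : Channel n => M.map ρ) '' Free = F := by
  refine subset_antisymm ?_ fun σ hσ => ?_
  · rintro _ ⟨M, hM, rfl⟩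
    exact hFree M hM ρ hρF
  · obtain ⟨M, hM, hMσ⟩ := hRepl σ hσ
    exact ⟨M, hM, (hMσ ρ).trans (by rw [hρ, one_smul])⟩

theorem stmt10_general
    (F : Set (Matrix ι ι ℂ)) (hFne : F.Nonempty) (hFstate : ∀ ρ ∈ F, IsState ρ)
    (Free : Set (Channel ι))
    (hFree : ∀ M ∈ Free, ∀ ρ ∈ F, M.map ρ ∈ F)
    (hRepl : ∀ σ ∈ F, ∃ M ∈ Free, ∀ τ : Matrix ι ι ℂ, M.map τ = τ.trace • σ)
    (N : Channel ι) :
    incPowerMax F (⇑N.map) = genPowerMax F (⇑N.map) ∧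
    genPowerMax F (⇑N.map)
      = sSup ((fun ρ => sInf ((fun M : Channel ι => Dmax (N.map ρ) (M.map ρ)) '' Free)) '' F) := by
  refine ⟨incPowerMax_eq_genPowerMax N hFstate hFne, congrArg sSup (Set.image_congr ?_)⟩
  intro ρ hρ
  rw [omegaMax, ← image_channel_apply_eq hFree hRepl hρ (hFstate ρ hρ).2, Set.image_image]

/-- for `D_max` the resource generating and increasing powers coincide and admit
the max-min characterization over free channels. -/
theorem stmt10
    (F : Set (Matrix ι ι ℂ)) (hFne : F.Nonempty) (hFstate : ∀ ρ ∈ F, IsState ρ)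
    (hFconv : Convex ℝ F) (hFclosed : IsClosed F)
    (Free : Set (Channel ι))
    (hFree : ∀ M ∈ Free, ∀ ρ ∈ F, M.map ρ ∈ F)
    (hRepl : ∀ σ ∈ F, ∃ M ∈ Free, ∀ τ : Matrix ι ι ℂ, M.map τ = τ.trace • σ)
    (N : Channel ι) :
    incPowerMax F (⇑N.map) = genPowerMax F (⇑N.map) ∧
    genPowerMax F (⇑N.map)
      = sSup ((fun ρ => sInf ((fun M : Channel ι => Dmax (N.map ρ) (M.map ρ)) '' Free)) '' F) :=
  stmt10_general F hFne hFstate Free hFree hRepl N
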